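/- If there exist quaternion matrices X ∈ ℍ^{p1×n}, W ∈ ℍ^{m×q1}, Y ∈ ℍ^{p2×q2}, Z ∈ ℍ^{p3×q3} such that BX + WE + CYF + DZG = A, then r([A B C D; E 0 0 0; F 0 0 0; G 0 0 0]) = r([B C D]) + r([E; F; G]). -/

import Mathlib

open Matrix

abbrev H : Type := Quaternion ℝ

noncomputable def rk {α β : Type} [Fintype α] [Fintype β] (M : Matrix α β H) : ℕ :=
  Module.finrank Hᵐᵒᵖ (Submodule.span Hᵐᵒᵖ (Set.range fun j : β => fun i : α => M i j))

/-! With `B' = [B C D]`, `E' = [E; F; G]`, `X' = [X; Y F; Z G]` and `W' = [W 0 0]` the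
hypothesis reads `A = B' X' + W' E'`. After regrouping rows and columns the big matrix is
`[A B'; E' 0] = [1 W'; 0 1] * [0 B'; E' 0] * [1 0; X' 1]`, whose outer factors are invertible,
so its rank is that of the antidiagonal block matrix, `r(B') + r(E')`.

Column spaces are submodules over `Kᵐᵒᵖ`: this is how right scalar multiplication is encoded. -/

open Module Submodule

theorem LinearMap.finrank_range_comp_comp {R M₁ M₂ M₃ M₄ : Type*} [Ring R]
    [AddCommGroup M₁] [AddCommGroup M₂] [AddCommGroup M₃] [AddCommGroup M₄]
    [Module R M₁] [Module R M₂] [Module R M₃] [Module R M₄]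
    {f : M₃ →ₗ[R] M₄} {h : M₂ →ₗ[R] M₃} {g : M₁ →ₗ[R] M₂}
    (hf : Function.Injective f) (hg : Function.Surjective g) :
    finrank R (LinearMap.range (f ∘ₗ h ∘ₗ g)) = finrank R (LinearMap.range h) := by
  rw [LinearMap.range_comp, LinearMap.range_comp_of_range_eq_top _ (LinearMap.range_eq_top.2 hg)]
  exact (equivMapOfInjective f hf _).finrank_eq.symm

theorem Submodule.finrank_prod {K M N : Type*} [DivisionRing K]
    [AddCommGroup M] [AddCommGroup N] [Module K M] [Module K N]
    (p : Submodule K M) (q : Submodule K N) [FiniteDimensional K p] [FiniteDimensional K q] :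
    finrank K (p.prod q) = finrank K p + finrank K q := by
  rw [← p.range_subtype, ← q.range_subtype, ← LinearMap.range_prodMap,
    LinearMap.finrank_range_of_inj (p.injective_subtype.prodMap q.injective_subtype),
    Module.finrank_prod, p.range_subtype, q.range_subtype]

instance Module.Finite.mulOpposite_self {R : Type*} [Semiring R] : Module.Finite Rᵐᵒᵖ R :=
  ⟨⟨{1}, eq_top_iff.2 fun x _ => by
    simpa using smul_mem (span Rᵐᵒᵖ {(1 : R)}) (MulOpposite.op x) (subset_span rfl)⟩⟩

namespace Matrix

variable {K : Type*} {α β γ δ α' β' : Type*}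

section Ring

variable [Ring K]

theorem range_mulVecBilin_eq_span_cols [Fintype β] (M : Matrix α β K) :
    LinearMap.range (mulVecBilin K Kᵐᵒᵖ M) = span Kᵐᵒᵖ (Set.range fun j i => M i j) := by
  classical
  apply le_antisymm
  · rintro _ ⟨v, rfl⟩
    rw [mulVecBilin_apply, mulVec_eq_sum]
    exact sum_mem fun j _ => smul_mem _ _ (subset_span ⟨j, rfl⟩)
  · rw [span_le]
    rintro _ ⟨j, rfl⟩
    exact ⟨Pi.single j 1, by ext i; simp [mulVec_single]⟩

theorem mulVecBilin_mul [Fintype β] [Fintype γ] (M : Matrix α β K) (N : Matrix β γ K) :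
    mulVecBilin K Kᵐᵒᵖ (M * N) = mulVecBilin K Kᵐᵒᵖ M ∘ₗ mulVecBilin K Kᵐᵒᵖ N :=
  LinearMap.ext fun v => (mulVec_mulVec v M N).symm

theorem mulVecBilin_injective_of_mul_eq_one [Fintype α] [Fintype β] [DecidableEq β]
    {P : Matrix α β K} {P' : Matrix β α K} (h : P' * P = 1) :
    Function.Injective (mulVecBilin K Kᵐᵒᵖ P) := fun v w hvw => by
  simpa [mulVec_mulVec, h] using congrArg (P' *ᵥ ·) hvw

theorem mulVecBilin_surjective_of_mul_eq_one [Fintype α] [Fintype β] [DecidableEq α]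
    {P : Matrix α β K} {P' : Matrix β α K} (h : P * P' = 1) :
    Function.Surjective (mulVecBilin K Kᵐᵒᵖ P) := fun v =>
  ⟨P' *ᵥ v, by simp [mulVec_mulVec, h]⟩

end Ring

section DivisionRing

variable [DivisionRing K]

noncomputable def colRank [Fintype β] (M : Matrix α β K) : ℕ :=
  finrank Kᵐᵒᵖ (LinearMap.range (mulVecBilin K Kᵐᵒᵖ M))

theorem colRank_mul_left_of_mul_eq_one [Fintype α] [Fintype β] [Fintype γ] [DecidableEq α]
    {P : Matrix γ α K} {P' : Matrix α γ K} (h : P' * P = 1) (M : Matrix α β K) :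
    (P * M).colRank = M.colRank := by
  rw [colRank, mulVecBilin_mul, ← LinearMap.comp_id (_ ∘ₗ _), LinearMap.comp_assoc,
    LinearMap.finrank_range_comp_comp (mulVecBilin_injective_of_mul_eq_one h)
      Function.surjective_id, colRank]

theorem colRank_mul_right_of_mul_eq_one [Fintype β] [Fintype γ] [DecidableEq β]
    {Q : Matrix β γ K} {Q' : Matrix γ β K} (M : Matrix α β K) (h : Q * Q' = 1) :
    (M * Q).colRank = M.colRank := by
  rw [colRank, mulVecBilin_mul, ← LinearMap.id_comp (mulVecBilin K Kᵐᵒᵖ M),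
    LinearMap.comp_assoc, LinearMap.finrank_range_comp_comp Function.injective_id
      (mulVecBilin_surjective_of_mul_eq_one h), colRank]

theorem colRank_submatrix [Fintype β] [Fintype β'] (M : Matrix α β K) (e₁ : α' ≃ α)
    (e₂ : β' ≃ β) : (M.submatrix e₁ e₂).colRank = M.colRank := by
  have h : mulVecBilin K Kᵐᵒᵖ (M.submatrix e₁ e₂)
      = (LinearEquiv.funCongrLeft Kᵐᵒᵖ K e₁).toLinearMap ∘ₗ mulVecBilin K Kᵐᵒᵖ M
        ∘ₗ (LinearEquiv.funCongrLeft Kᵐᵒᵖ K e₂.symm).toLinearMap :=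
    LinearMap.ext fun v => submatrix_mulVec_equiv M v e₁ e₂
  rw [colRank, h, LinearMap.finrank_range_comp_comp (LinearEquiv.injective _)
    (LinearEquiv.surjective _), colRank]

theorem colRank_fromBlocks_zero₁₁_zero₂₂ [Fintype α] [Fintype β] [Fintype γ] [Fintype δ]
    (B : Matrix α β K) (E : Matrix γ δ K) :
    (fromBlocks 0 B E 0).colRank = B.colRank + E.colRank := by
  let eRows := LinearEquiv.sumArrowLequivProdArrow α γ Kᵐᵒᵖ K
  let eCols := (LinearEquiv.sumArrowLequivProdArrow δ β Kᵐᵒᵖ K).trans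
    (LinearEquiv.prodComm Kᵐᵒᵖ (δ → K) (β → K))
  have h : mulVecBilin K Kᵐᵒᵖ (fromBlocks 0 B E 0) = eRows.symm.toLinearMap
      ∘ₗ (mulVecBilin K Kᵐᵒᵖ B).prodMap (mulVecBilin K Kᵐᵒᵖ E) ∘ₗ eCols.toLinearMap := by
    ext v (i | i) <;> simp [eRows, eCols, fromBlocks_mulVec] <;> rfl
  rw [colRank, h, LinearMap.finrank_range_comp_comp (LinearEquiv.injective _)
    (LinearEquiv.surjective _), LinearMap.range_prodMap, Submodule.finrank_prod, colRank, colRank]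

theorem colRank_fromBlocks_zero₂₂_of_add_eq [Fintype α] [Fintype β] [Fintype γ] [Fintype δ]
    {A : Matrix α δ K} {B : Matrix α β K} {E : Matrix γ δ K} {X : Matrix β δ K}
    {W : Matrix α γ K} (hA : B * X + W * E = A) :
    (fromBlocks A B E 0).colRank = B.colRank + E.colRank := by
  classical
  have hfactor : fromBlocks A B E 0
      = (fromBlocks 1 W 0 1 : Matrix (α ⊕ γ) (α ⊕ γ) K) * fromBlocks 0 B E 0 *
        (fromBlocks 1 0 X 1 : Matrix (δ ⊕ β) (δ ⊕ β) K) := by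
    simp [fromBlocks_multiply, ← hA, add_comm]
  rw [hfactor,
    colRank_mul_right_of_mul_eq_one (Q' := (fromBlocks 1 0 (-X) 1 : Matrix (δ ⊕ β) (δ ⊕ β) K))
      _ (by simp [fromBlocks_multiply, fromBlocks_one]),
    colRank_mul_left_of_mul_eq_one (P' := (fromBlocks 1 (-W) 0 1 : Matrix (α ⊕ γ) (α ⊕ γ) K))
      (by simp [fromBlocks_multiply, fromBlocks_one]),
    colRank_fromBlocks_zero₁₁_zero₂₂]

end DivisionRing

end Matrix

theorem rk_eq_colRank {α β : Type} [Fintype α] [Fintype β] (M : Matrix α β H) :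
    rk M = M.colRank := by
  rw [colRank, range_mulVecBilin_eq_span_cols]
  rfl

theorem stmt_13 {m n p1 p2 p3 q1 q2 q3 : ℕ}
    (A : Matrix (Fin m) (Fin n) H) (B : Matrix (Fin m) (Fin p1) H)
    (C : Matrix (Fin m) (Fin p2) H) (D : Matrix (Fin m) (Fin p3) H)
    (E : Matrix (Fin q1) (Fin n) H) (F : Matrix (Fin q2) (Fin n) H)
    (G : Matrix (Fin q3) (Fin n) H)
    (hcon : ∃ (X : Matrix (Fin p1) (Fin n) H) (W : Matrix (Fin m) (Fin q1) H) (Y : Matrix (Fin p2) (Fin q2) H) (Z : Matrix (Fin p3) (Fin q3) H), B * X + W * E + C * Y * F + D * Z * G = A) :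
    rk (Matrix.fromRows (Matrix.fromRows (Matrix.fromRows (Matrix.fromCols (Matrix.fromCols (Matrix.fromCols A B) C) D) (Matrix.fromCols (Matrix.fromCols (Matrix.fromCols E (0 : Matrix (Fin q1) (Fin p1) H)) (0 : Matrix (Fin q1) (Fin p2) H)) (0 : Matrix (Fin q1) (Fin p3) H))) (Matrix.fromCols (Matrix.fromCols (Matrix.fromCols F (0 : Matrix (Fin q2) (Fin p1) H)) (0 : Matrix (Fin q2) (Fin p2) H)) (0 : Matrix (Fin q2) (Fin p3) H))) (Matrix.fromCols (Matrix.fromCols (Matrix.fromCols G (0 : Matrix (Fin q3) (Fin p1) H)) (0 : Matrix (Fin q3) (Fin p2) H)) (0 : Matrix (Fin q3) (Fin p3) H))) = rk (Matrix.fromCols (Matrix.fromCols B C) D) + rk (Matrix.fromRows (Matrix.fromRows E F) G) := by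
  obtain ⟨X, W, Y, Z, hA⟩ := hcon
  have hsplit : fromCols (fromCols B C) D * fromRows (fromRows X (Y * F)) (Z * G)
      + fromCols (fromCols W (0 : Matrix _ (Fin q2) H)) (0 : Matrix _ (Fin q3) H)
        * fromRows (fromRows E F) G = A := by
    simp only [fromCols_mul_fromRows, Matrix.zero_mul, add_zero, ← Matrix.mul_assoc, ← hA]
    abel
  let reassoc (a b c d : Type) : ((a ⊕ b) ⊕ c) ⊕ d ≃ a ⊕ ((b ⊕ c) ⊕ d) :=
    (Equiv.sumCongr (Equiv.sumAssoc a b c) (Equiv.refl d)).trans (Equiv.sumAssoc a (b ⊕ c) d)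
  calc _ = rk ((fromBlocks A (fromCols (fromCols B C) D) (fromRows (fromRows E F) G) 0).submatrix
        (reassoc _ _ _ _) (reassoc _ _ _ _)) := by
        congr 1
        ext (((i | i) | i) | i) (((j | j) | j) | j) <;> rfl
    _ = _ := by
      rw [rk_eq_colRank, rk_eq_colRank, rk_eq_colRank, colRank_submatrix,
        colRank_fromBlocks_zero₂₂_of_add_eq hsplit]
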